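/- arXiv:1501.04826 — 2 statements merged into one kernel-verified Lean document; each statement's English description precedes it below -/
import Mathlib

section
/- Let X₁ → Y₁, …, X_k → Y_k be partial implications over [n] with k ≥ 1. If there exist a partial implication X₀ → Y₀ and a confidence parameter γ with 0 < γ < 1 such that the entailment X₁ → Y₁, …, X_k → Y_k ⊨_γ X₀ → Y₀ holds properly, then the set X₁ → Y₁, …, X_k → Y_k enforces homogeneity. -/
open Finset

/-- Number of transactions in the dataset `D` that cover `X`, counted with multiplicity. -/
def cntD {n : ℕ} (D : Multiset (Finset (Fin n))) (X : Finset (Fin n)) : ℕ :=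
  (D.filter (fun Z => X ⊆ Z)).card

/-- `D ⊨_γ X → Y` : either no transaction covers `X`, or the confidence of `X → Y` is ≥ γ. -/
def satPI {n : ℕ} (γ : ℝ) (D : Multiset (Finset (Fin n))) (X Y : Finset (Fin n)) : Prop :=
  cntD D X = 0 ∨ γ * (cntD D X : ℝ) ≤ (cntD D (X ∪ Y) : ℝ)

/-- Entailment at confidence threshold γ from the premises indexed by `L`. -/
def entailsFrom {n k : ℕ} (γ : ℝ) (P : Fin k → Finset (Fin n) × Finset (Fin n))
    (L : Finset (Fin k)) (X₀ Y₀ : Finset (Fin n)) : Prop :=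
  ∀ D : Multiset (Finset (Fin n)),
    (∀ i ∈ L, satPI γ D (P i).1 (P i).2) → satPI γ D X₀ Y₀

/-- Proper entailment from the premises indexed by `L`: the entailment holds,
and it fails from every proper subset of the premises. -/
def properFrom {n k : ℕ} (γ : ℝ) (P : Fin k → Finset (Fin n) × Finset (Fin n))
    (L : Finset (Fin k)) (X₀ Y₀ : Finset (Fin n)) : Prop :=
  entailsFrom γ P L X₀ Y₀ ∧ ∀ L' ⊂ L, ¬ entailsFrom γ P L' X₀ Y₀

/-- The weight `w_Z(X → Y)`: `1-γ` if `Z` witnesses, `-γ` if `Z` violates, `0` otherwise. -/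
noncomputable def wt {n : ℕ} (γ : ℝ) (Z X Y : Finset (Fin n)) : ℝ :=
  if X ∪ Y ⊆ Z then 1 - γ else if X ⊆ Z then -γ else 0

/-- The premises indexed by `L` enforce homogeneity. -/
def homogFrom {n k : ℕ} (P : Fin k → Finset (Fin n) × Finset (Fin n))
    (L : Finset (Fin k)) : Prop :=
  ∀ Z : Finset (Fin n),
    (∀ i ∈ L, ¬ (P i).1 ⊆ Z ∨ (P i).1 ∪ (P i).2 ⊆ Z) →
    ((∀ i ∈ L, ¬ (P i).1 ⊆ Z) ∨ (∀ i ∈ L, (P i).1 ∪ (P i).2 ⊆ Z))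

/-- The critical threshold `γ*({Xᵢ → Yᵢ : i ∈ L}, X)`. -/
noncomputable def gammaStar {n k : ℕ} (P : Fin k → Finset (Fin n) × Finset (Fin n))
    (L : Finset (Fin k)) (X : Finset (Fin n)) : ℝ :=
  sInf { r : ℝ | ∃ lam : Fin k → ℝ, (∀ i ∈ L, 0 ≤ lam i) ∧ (∑ i ∈ L, lam i) = 1 ∧
    r = (Finset.univ.filter (fun Z : Finset (Fin n) => ¬ X ⊆ Z)).fold max 0
          (fun Z => (∑ i ∈ L.filter (fun i => (P i).1 ∪ (P i).2 ⊆ Z), lam i) /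
                    (∑ i ∈ L.filter (fun i => (P i).1 ⊆ Z), lam i)) }

/-!
Let `Z` be a transaction that fires some premises, witnesses all the premises it fires, and
leaves some premise unfired. If `Z` witnesses `X₀ → Y₀`, intersecting every transaction of a
dataset with `Z` preserves the counts that decide the premises witnessed by `Z` and the
conclusion, and makes every other premise hold vacuously; so those witnessed premises alone
already entail `X₀ → Y₀`. Otherwise, adding enough copies of `Z` to a dataset makes every
premise fired by `Z` hold, leaves the others untouched and can only lower the confidence of
`X₀ → Y₀`; so the premises not fired by `Z` alone entail `X₀ → Y₀`. Either way a proper subset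
of the premises suffices, unless `Z` fires all of them or none.
-/

section Counting

variable {n : ℕ} {D D' : Multiset (Finset (Fin n))} {X Y Z : Finset (Fin n)} {γ : ℝ}

lemma cntD_le_card (D : Multiset (Finset (Fin n))) (X : Finset (Fin n)) :
    cntD D X ≤ Multiset.card D :=
  Multiset.card_le_card (Multiset.filter_le _ _)

lemma cntD_add (D D' : Multiset (Finset (Fin n))) (X : Finset (Fin n)) :
    cntD (D + D') X = cntD D X + cntD D' X := by
  rw [cntD, cntD, cntD, Multiset.filter_add, Multiset.card_add]

lemma cntD_replicate (m : ℕ) (Z X : Finset (Fin n)) :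
    cntD (Multiset.replicate m Z) X = if X ⊆ Z then m else 0 := by
  unfold cntD
  split_ifs with h
  · rw [Multiset.filter_eq_self.2 fun _ hT => Multiset.eq_of_mem_replicate hT ▸ h,
      Multiset.card_replicate]
  · rw [Multiset.filter_eq_nil.2 fun _ hT => Multiset.eq_of_mem_replicate hT ▸ h,
      Multiset.card_zero]

lemma cntD_add_replicate_of_not_subset (m : ℕ) (h : ¬ X ⊆ Z) :
    cntD (D + Multiset.replicate m Z) X = cntD D X := by
  rw [cntD_add, cntD_replicate, if_neg h, add_zero]

lemma cntD_add_replicate_of_subset (m : ℕ) (h : X ⊆ Z) :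
    cntD (D + Multiset.replicate m Z) X = cntD D X + m := by
  rw [cntD_add, cntD_replicate, if_pos h]

lemma cntD_map_inter_of_subset (D : Multiset (Finset (Fin n))) (h : X ⊆ Z) :
    cntD (D.map (· ∩ Z)) X = cntD D X := by
  rw [cntD, cntD, Multiset.filter_map, Multiset.card_map]
  congr 2
  ext T
  simp [Finset.subset_inter_iff, h]

lemma cntD_map_inter_of_not_subset (D : Multiset (Finset (Fin n))) (h : ¬ X ⊆ Z) :
    cntD (D.map (· ∩ Z)) X = 0 := by
  rw [cntD, Multiset.card_eq_zero, Multiset.filter_eq_nil]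
  simp only [Multiset.mem_map]
  rintro _ ⟨T, -, rfl⟩ hX
  exact h (hX.trans Finset.inter_subset_right)

lemma satPI_of_cntD_le (hγ : 0 ≤ γ) (hX : cntD D X ≤ cntD D' X)
    (hXY : cntD D' (X ∪ Y) ≤ cntD D (X ∪ Y)) (h : satPI γ D' X Y) : satPI γ D X Y := by
  rcases h with h | h
  · exact Or.inl (Nat.eq_zero_of_le_zero (h ▸ hX))
  · refine Or.inr (le_trans ?_ (le_trans h (Nat.cast_le.2 hXY)))
    exact mul_le_mul_of_nonneg_left (Nat.cast_le.2 hX) hγ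

lemma satPI_map_inter_iff (h : X ∪ Y ⊆ Z) : satPI γ (D.map (· ∩ Z)) X Y ↔ satPI γ D X Y := by
  rw [satPI, satPI, cntD_map_inter_of_subset D h,
    cntD_map_inter_of_subset D (Finset.subset_union_left.trans h)]

lemma satPI_map_inter_of_not_subset (h : ¬ X ⊆ Z) : satPI γ (D.map (· ∩ Z)) X Y :=
  Or.inl (cntD_map_inter_of_not_subset D h)

lemma satPI_add_replicate_iff_of_not_subset (m : ℕ) (h : ¬ X ⊆ Z) :
    satPI γ (D + Multiset.replicate m Z) X Y ↔ satPI γ D X Y := by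
  rw [satPI, satPI, cntD_add_replicate_of_not_subset m h,
    cntD_add_replicate_of_not_subset m fun hXY => h (Finset.subset_union_left.trans hXY)]

lemma satPI_add_replicate_of_union_subset {m : ℕ} (hγ₀ : 0 ≤ γ) (hγ₁ : γ ≤ 1) (h : X ∪ Y ⊆ Z)
    (hm : (Multiset.card D : ℝ) ≤ (1 - γ) * m) :
    satPI γ (D + Multiset.replicate m Z) X Y := by
  right
  rw [cntD_add_replicate_of_subset m h,
    cntD_add_replicate_of_subset m (Finset.subset_union_left.trans h)]
  have hX : (cntD D X : ℝ) ≤ Multiset.card D := Nat.cast_le.2 (cntD_le_card D X)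
  push_cast
  nlinarith [mul_le_mul_of_nonneg_left hX hγ₀, (cntD D (X ∪ Y)).cast_nonneg (α := ℝ)]

lemma satPI_of_satPI_add_replicate (m : ℕ) (hγ : 0 ≤ γ) (h : ¬ X ∪ Y ⊆ Z)
    (hsat : satPI γ (D + Multiset.replicate m Z) X Y) : satPI γ D X Y := by
  refine satPI_of_cntD_le hγ ?_ (cntD_add_replicate_of_not_subset m h).le hsat
  rw [cntD_add, cntD_replicate]
  exact Nat.le_add_right _ _

end Counting

section Entailment

variable {n k : ℕ} {γ : ℝ} {P : Fin k → Finset (Fin n) × Finset (Fin n)} {L : Finset (Fin k)}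
  {X₀ Y₀ Z : Finset (Fin n)}

lemma entailsFrom_filter_witnessed (hZ : ∀ i ∈ L, ¬ (P i).1 ⊆ Z ∨ (P i).1 ∪ (P i).2 ⊆ Z)
    (h₀ : X₀ ∪ Y₀ ⊆ Z) (hL : entailsFrom γ P L X₀ Y₀) :
    entailsFrom γ P (L.filter fun i => (P i).1 ∪ (P i).2 ⊆ Z) X₀ Y₀ := by
  intro D hD
  rw [← satPI_map_inter_iff h₀]
  refine hL _ fun i hi => ?_
  rcases hZ i hi with hX | hXY
  · exact satPI_map_inter_of_not_subset hX
  · exact (satPI_map_inter_iff hXY).2 (hD i (mem_filter.2 ⟨hi, hXY⟩))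

lemma entailsFrom_filter_not_fired (hγ₀ : 0 ≤ γ) (hγ₁ : γ < 1)
    (hZ : ∀ i ∈ L, ¬ (P i).1 ⊆ Z ∨ (P i).1 ∪ (P i).2 ⊆ Z)
    (h₀ : ¬ X₀ ∪ Y₀ ⊆ Z) (hL : entailsFrom γ P L X₀ Y₀) :
    entailsFrom γ P (L.filter fun i => ¬ (P i).1 ⊆ Z) X₀ Y₀ := by
  intro D hD
  obtain ⟨m, hdiv⟩ := exists_nat_ge ((Multiset.card D : ℝ) / (1 - γ))
  have hm : (Multiset.card D : ℝ) ≤ (1 - γ) * m := by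
    rwa [div_le_iff₀ (sub_pos.2 hγ₁), mul_comm] at hdiv
  refine satPI_of_satPI_add_replicate m hγ₀ h₀ (hL _ fun i hi => ?_)
  rcases hZ i hi with hX | hXY
  · exact (satPI_add_replicate_iff_of_not_subset m hX).2 (hD i (mem_filter.2 ⟨hi, hX⟩))
  · exact satPI_add_replicate_of_union_subset hγ₀ hγ₁.le hXY hm

theorem homogFrom_of_properFrom (hγ₀ : 0 ≤ γ) (hγ₁ : γ < 1) (h : properFrom γ P L X₀ Y₀) :
    homogFrom P L := by
  obtain ⟨hL, hmin⟩ := h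
  intro Z hZ
  by_cases h₀ : X₀ ∪ Y₀ ⊆ Z
  · right
    by_contra! hsome
    exact hmin _ (filter_ssubset.2 hsome) (entailsFrom_filter_witnessed hZ h₀ hL)
  · left
    by_contra! hsome
    exact hmin _ (filter_ssubset.2 (by simpa using hsome))
      (entailsFrom_filter_not_fired hγ₀ hγ₁ hZ h₀ hL)

end Entailment

theorem stmt12_general {n k : ℕ}
    (P : Fin k → Finset (Fin n) × Finset (Fin n))
    (h : ∃ (X₀ Y₀ : Finset (Fin n)) (γ : ℝ), 0 < γ ∧ γ < 1 ∧
      properFrom γ P Finset.univ X₀ Y₀) :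
    homogFrom P Finset.univ := by
  obtain ⟨X₀, Y₀, γ, hγ₀, hγ₁, hproper⟩ := h
  exact homogFrom_of_properFrom hγ₀.le hγ₁ hproper

theorem stmt12 {n k : ℕ} (hk : 1 ≤ k)
    (P : Fin k → Finset (Fin n) × Finset (Fin n))
    (h : ∃ (X₀ Y₀ : Finset (Fin n)) (γ : ℝ), 0 < γ ∧ γ < 1 ∧
      properFrom γ P Finset.univ X₀ Y₀) :
    homogFrom P Finset.univ :=
  stmt12_general P h
end

section
/- Let γ be a confidence parameter with 0 < γ < 1 and let X₀ → Y₀, X₁ → Y₁, …, X_k → Y_k be partial implications over [n] with k ≥ 1. If γ ≥ (k−1)/k, then the following are equivalent: (1) X₁ → Y₁, …, X_k → Y_k ⊨_γ X₀ → Y₀; (2) there exists L ⊆ [k] such that {X_i → Y_i : i ∈ L} ⊨_γ X₀ → Y₀ holds properly; (3) either Y₀ ⊆ X₀, or there exists a non-empty L ⊆ [k] such that (a) {X_i → Y_i : i ∈ L} enforces homogeneity, (b) ⋃_{i∈L} X_i ⊆ X₀ ⊆ ⋃_{i∈L} X_iY_i, and (c) Y₀ ⊆ X₀ ∪ ⋂_{i∈L}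 Y_i. -/
open Finset

/-! Give each transaction `Z` the weight `wt γ Z X Y`; a dataset satisfies `X → Y` exactly when
its total weight is nonnegative. Entailment is therefore a statement about nonnegative weightings
of transactions, and by Farkas' lemma (Hahn–Banach for the closed cone `premiseCone`, then
rounding real weightings to multisets) it holds iff `wt γ · X₀ Y₀` dominates pointwise a
nonnegative combination `∑ λᵢ • wt γ · Xᵢ Yᵢ`. Evaluating such a certificate on suitable
transactions shows that `∑ λᵢ = 1` and that its support `L` satisfies (3). Conversely, for `L` as
in (3) the uniform certificate `λ = 1 / |L|` on `L` works as soon as `γ ≥ (|L| - 1) / |L|`: a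
transaction outside `X₀` that violates one premise of `L` earns at most `(|L| - 1)(1 - γ) - γ ≤ 0`.
The equivalence of (1) and (2) is just the existence of a minimal entailing subfamily. -/

lemma Multiset.count_sum_replicate {α : Type*} [Fintype α] [DecidableEq α] (m : α → ℕ) (a : α) :
    (∑ b, Multiset.replicate (m b) b).count a = m a := by
  simp [Multiset.count_sum', Multiset.count_replicate]

lemma exists_nat_weight_of_strict {α ι : Type*} [Fintype α] [Finite ι] {y : α → ℝ} (hy : 0 ≤ y)
    {a : ι → α → ℝ} {b : α → ℝ} (ha : ∀ i, 0 < ∑ x, y x * a i x) (hb : ∑ x, y x * b x < 0) :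
    ∃ m : α → ℕ, (∀ i, 0 < ∑ x, (m x : ℝ) * a i x) ∧ ∑ x, (m x : ℝ) * b x < 0 := by
  have hlim : ∀ c : α → ℝ, Filter.Tendsto (fun N : ℕ => ∑ x, (⌈y x * N⌉₊ : ℝ) / N * c x)
      Filter.atTop (nhds (∑ x, y x * c x)) := fun c =>
    tendsto_finsetSum _ fun x _ =>
      ((tendsto_nat_ceil_mul_div_atTop (hy x)).comp tendsto_natCast_atTop_atTop).mul_const _
  obtain ⟨N, hN, ha', hb'⟩ := ((Filter.eventually_gt_atTop 0).and
    ((Filter.eventually_all.2 fun i => (hlim (a i)).eventually_const_lt (ha i)).and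
      ((hlim b).eventually_lt_const hb))).exists
  have hscale : ∀ c : α → ℝ,
      ∑ x, (⌈y x * N⌉₊ : ℝ) * c x = N * ∑ x, (⌈y x * N⌉₊ : ℝ) / N * c x := by
    intro c
    rw [mul_sum]
    exact sum_congr rfl fun x _ => by field_simp
  refine ⟨fun x => ⌈y x * N⌉₊, fun i => ?_, ?_⟩
  · rw [hscale]; exact mul_pos (by exact_mod_cast hN) (ha' i)
  · rw [hscale]; exact mul_neg_of_pos_of_neg (by exact_mod_cast hN) hb'

lemma eq_zero_of_sum_mul_nonpos {ι : Type*} [Fintype ι] {c a : ι → ℝ} (hc : 0 ≤ c)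
    (ha : ∀ j, c j ≠ 0 → 0 ≤ a j) (h : ∑ j, c j * a j ≤ 0) {i : ι} (hci : c i ≠ 0) :
    a i = 0 := by
  have hterm : ∀ j ∈ univ, 0 ≤ c j * a j := fun j _ => by
    by_cases hj : c j = 0
    · simp [hj]
    · exact mul_nonneg (hc j) (ha j hj)
  have := (sum_eq_zero_iff_of_nonneg hterm).1 (h.antisymm (sum_nonneg hterm)) i (mem_univ i)
  exact (mul_eq_zero.1 this).resolve_left hci

section Weight

variable {n : ℕ} {γ : ℝ} {Z X Y : Finset (Fin n)}

lemma wt_of_union_subset (h : X ∪ Y ⊆ Z) : wt γ Z X Y = 1 - γ := if_pos h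

lemma wt_of_violation (hX : X ⊆ Z) (hXY : ¬ X ∪ Y ⊆ Z) : wt γ Z X Y = -γ := by
  rw [wt, if_neg hXY, if_pos hX]

lemma wt_of_not_subset (hX : ¬ X ⊆ Z) : wt γ Z X Y = 0 := by
  rw [wt, if_neg fun h => hX (subset_union_left.trans h), if_neg hX]

lemma wt_univ : wt γ univ X Y = 1 - γ := wt_of_union_subset (subset_univ _)

lemma wt_le_one_sub (hγ1 : γ ≤ 1) : wt γ Z X Y ≤ 1 - γ := by
  unfold wt; split_ifs <;> linarith

lemma neg_le_wt (hγ0 : 0 ≤ γ) : -γ ≤ wt γ Z X Y := by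
  unfold wt; split_ifs <;> linarith

lemma wt_eq_neg_iff (hγ0 : 0 < γ) : wt γ Z X Y = -γ ↔ X ⊆ Z ∧ ¬ X ∪ Y ⊆ Z := by
  unfold wt; split_ifs <;> simp_all; linarith

lemma wt_eq_indicator_sub :
    wt γ Z X Y = (if X ∪ Y ⊆ Z then 1 else 0) - γ * if X ⊆ Z then 1 else 0 := by
  by_cases hXY : X ∪ Y ⊆ Z
  · simp [wt, hXY, subset_union_left.trans hXY]
  · by_cases hX : X ⊆ Z <;> simp [wt, hXY, hX]

lemma cntD_eq_sum_count (D : Multiset (Finset (Fin n))) (X : Finset (Fin n)) :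
    (cntD D X : ℝ) = ∑ Z, (D.count Z : ℝ) * if X ⊆ Z then 1 else 0 := by
  rw [cntD, ← Multiset.sum_count_eq_card (s := univ) fun _ _ => mem_univ _]
  push_cast
  simp [Multiset.count_filter]

lemma satPI_iff_sum_count_mul_wt_nonneg (D : Multiset (Finset (Fin n))) :
    satPI γ D X Y ↔ 0 ≤ ∑ Z, (D.count Z : ℝ) * wt γ Z X Y := by
  simp only [wt_eq_indicator_sub, mul_sub, sum_sub_distrib, mul_left_comm _ γ, ← mul_sum,
    ← cntD_eq_sum_count, sub_nonneg, satPI]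
  refine ⟨?_, Or.inr⟩
  rintro (h | h)
  · simp [h]
  · exact h

end Weight

section Entailment

variable {n k : ℕ} {γ : ℝ} {P : Fin k → Finset (Fin n) × Finset (Fin n)}
  {X₀ Y₀ : Finset (Fin n)}

lemma entailsFrom.mono {L L' : Finset (Fin k)} (hLL' : L ⊆ L')
    (h : entailsFrom γ P L X₀ Y₀) : entailsFrom γ P L' X₀ Y₀ :=
  fun D hD => h D fun i hi => hD i (hLL' hi)

lemma exists_properFrom_of_entailsFrom {L : Finset (Fin k)} (h : entailsFrom γ P L X₀ Y₀) :
    ∃ L', properFrom γ P L' X₀ Y₀ := by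
  induction L using Finset.strongInduction with
  | H L ih =>
    by_cases hmin : ∃ L' ⊂ L, entailsFrom γ P L' X₀ Y₀
    · obtain ⟨L', hL', h'⟩ := hmin
      exact ih L' hL' h'
    · exact ⟨L, h, fun L' hL' h' => hmin ⟨L', hL', h'⟩⟩

def premiseCone (γ : ℝ) (P : Fin k → Finset (Fin n) × Finset (Fin n)) :
    Set (Finset (Fin n) → ℝ) :=
  {v | ∃ lam : Fin k → ℝ, 0 ≤ lam ∧ ∀ Z, ∑ i, lam i * wt γ Z (P i).1 (P i).2 ≤ v Z}

lemma entailsFrom_of_mem_premiseCone (h : (fun Z => wt γ Z X₀ Y₀) ∈ premiseCone γ P) :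
    entailsFrom γ P univ X₀ Y₀ := by
  obtain ⟨lam, hlam, hdom⟩ := h
  intro D hD
  simp only [satPI_iff_sum_count_mul_wt_nonneg] at hD ⊢
  calc 0 ≤ ∑ i, lam i * ∑ Z, (D.count Z : ℝ) * wt γ Z (P i).1 (P i).2 :=
        sum_nonneg fun i _ => mul_nonneg (hlam i) (hD i (mem_univ i))
    _ = ∑ Z, (D.count Z : ℝ) * ∑ i, lam i * wt γ Z (P i).1 (P i).2 := by
        simp only [mul_sum]
        rw [sum_comm]
        exact sum_congr rfl fun _ _ => sum_congr rfl fun _ _ => by ring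
    _ ≤ ∑ Z, (D.count Z : ℝ) * wt γ Z X₀ Y₀ :=
        sum_le_sum fun Z _ => mul_le_mul_of_nonneg_left (hdom Z) (Nat.cast_nonneg _)

lemma convex_premiseCone : Convex ℝ (premiseCone γ P) := by
  rintro v ⟨lam, hlam, hdom⟩ w ⟨mu, hmu, hdom'⟩ a b ha hb -
  refine ⟨a • lam + b • mu, add_nonneg (smul_nonneg ha hlam) (smul_nonneg hb hmu), fun Z => ?_⟩
  calc ∑ i, (a • lam + b • mu) i * wt γ Z (P i).1 (P i).2
      = a * ∑ i, lam i * wt γ Z (P i).1 (P i).2 + b * ∑ i, mu i * wt γ Z (P i).1 (P i).2 := by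
        simp only [mul_sum, ← sum_add_distrib, Pi.add_apply, Pi.smul_apply, smul_eq_mul]
        exact sum_congr rfl fun _ _ => by ring
    _ ≤ a * v Z + b * w Z :=
        add_le_add (mul_le_mul_of_nonneg_left (hdom Z) ha) (mul_le_mul_of_nonneg_left (hdom' Z) hb)
    _ = (a • v + b • w) Z := rfl

lemma smul_mem_premiseCone {t : ℝ} (ht : 0 ≤ t) {v : Finset (Fin n) → ℝ}
    (hv : v ∈ premiseCone γ P) : t • v ∈ premiseCone γ P := by
  obtain ⟨lam, hlam, hdom⟩ := hv
  refine ⟨t • lam, smul_nonneg ht hlam, fun Z => ?_⟩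
  simpa only [Pi.smul_apply, smul_eq_mul, mul_assoc, ← mul_sum] using
    mul_le_mul_of_nonneg_left (hdom Z) ht

lemma mem_premiseCone_of_nonneg {v : Finset (Fin n) → ℝ} (hv : 0 ≤ v) :
    v ∈ premiseCone γ P :=
  ⟨0, le_rfl, fun Z => by simpa using hv Z⟩

lemma wt_mem_premiseCone (i : Fin k) :
    (fun Z => wt γ Z (P i).1 (P i).2) ∈ premiseCone γ P := by
  refine ⟨Pi.single i 1, Pi.single_nonneg.2 zero_le_one, fun Z => ?_⟩
  simp [Pi.single_apply]

/-- The coordinate at `univ` bounds the coefficients, since every premise has weight `1 - γ > 0`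
there; so coefficient sequences have convergent subsequences. -/
lemma isClosed_premiseCone (hγ1 : γ < 1) : IsClosed (premiseCone γ P) := by
  refine IsSeqClosed.isClosed fun v w hv hvw => ?_
  choose lam hlam hdom using hv
  have hcoord : ∀ Z, Filter.Tendsto (fun m => v m Z) Filter.atTop (nhds (w Z)) :=
    tendsto_pi_nhds.mp hvw
  obtain ⟨c, hc⟩ := (hcoord univ).bddAbove_range
  have hbox : ∀ m, lam m ∈ Set.univ.pi fun _ => Set.Icc (0 : ℝ) (c / (1 - γ)) := by
    intro m i _
    refine ⟨hlam m i, ?_⟩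
    rw [le_div_iff₀ (by linarith)]
    calc lam m i * (1 - γ) ≤ ∑ j, lam m j * (1 - γ) :=
          single_le_sum (f := fun j => lam m j * (1 - γ))
            (fun j _ => mul_nonneg (hlam m j) (by linarith)) (mem_univ i)
      _ = ∑ j, lam m j * wt γ univ (P j).1 (P j).2 := by simp only [wt_univ]
      _ ≤ v m univ := hdom m univ
      _ ≤ c := hc ⟨m, rfl⟩
  obtain ⟨mu, hmu, φ, hφ, hlim⟩ :=
    (isCompact_univ_pi fun _ => isCompact_Icc).tendsto_subseq hbox
  refine ⟨mu, fun i => (hmu i (Set.mem_univ i)).1, fun Z => ?_⟩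
  refine le_of_tendsto_of_tendsto' ?_ ((hcoord Z).comp hφ.tendsto_atTop) fun m => hdom (φ m) Z
  exact tendsto_finsetSum _ fun i _ => (tendsto_pi_nhds.mp hlim i).mul_const _

lemma exists_weight_of_notMem_premiseCone (hγ1 : γ < 1) {v : Finset (Fin n) → ℝ}
    (hv : v ∉ premiseCone γ P) :
    ∃ y : Finset (Fin n) → ℝ, 0 ≤ y ∧ (∀ i, 0 ≤ ∑ Z, y Z * wt γ Z (P i).1 (P i).2) ∧
      ∑ Z, y Z * v Z < 0 := by
  obtain ⟨f, u, hf, hfv⟩ :=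
    geometric_hahn_banach_closed_point convex_premiseCone (isClosed_premiseCone hγ1) hv
  have hu : 0 < u := by simpa using hf 0 (mem_premiseCone_of_nonneg le_rfl)
  have hf_nonpos : ∀ a ∈ premiseCone γ P, f a ≤ 0 := by
    intro a ha
    by_contra! hpos
    have := hf _ (smul_mem_premiseCone (div_pos hu hpos).le ha)
    rw [map_smul, smul_eq_mul, div_mul_cancel₀ _ hpos.ne'] at this
    exact lt_irrefl u this
  let y : Finset (Fin n) → ℝ := fun Z => -f fun W => if Z = W then 1 else 0
  have hy : ∀ a, ∑ Z, y Z * a Z = -f a := by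
    intro a
    rw [show f a = (f : (Finset (Fin n) → ℝ) →ₗ[ℝ] ℝ) a from rfl, LinearMap.pi_apply_eq_sum_univ,
      ← sum_neg_distrib]
    exact sum_congr rfl fun Z _ => by simp [y, mul_comm]
  refine ⟨y, fun Z => neg_nonneg.2 (hf_nonpos _ (mem_premiseCone_of_nonneg fun W => ?_)),
    fun i => ?_, ?_⟩
  · dsimp only; split_ifs <;> norm_num
  · rw [hy]; exact neg_nonneg.2 (hf_nonpos _ (wt_mem_premiseCone i))
  · rw [hy]; linarith

lemma sum_add_single_univ_mul_wt (y : Finset (Fin n) → ℝ) (δ : ℝ) (X Y : Finset (Fin n)) :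
    ∑ Z, (y + Pi.single univ δ : Finset (Fin n) → ℝ) Z * wt γ Z X Y =
      ∑ Z, y Z * wt γ Z X Y + δ * (1 - γ) := by
  simp [add_mul, sum_add_distrib, Pi.single_apply, wt_univ]

lemma exists_strict_weight (hγ1 : γ < 1) {y : Finset (Fin n) → ℝ} (hy : 0 ≤ y)
    (hprem : ∀ i, 0 ≤ ∑ Z, y Z * wt γ Z (P i).1 (P i).2) (hconc : ∑ Z, y Z * wt γ Z X₀ Y₀ < 0) :
    ∃ y' : Finset (Fin n) → ℝ, 0 ≤ y' ∧ (∀ i, 0 < ∑ Z, y' Z * wt γ Z (P i).1 (P i).2) ∧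
      ∑ Z, y' Z * wt γ Z X₀ Y₀ < 0 := by
  obtain ⟨ε, hε, hεconc⟩ := exists_between (neg_pos.2 hconc)
  have hδ : ε / (1 - γ) * (1 - γ) = ε := div_mul_cancel₀ _ (by linarith)
  refine ⟨y + Pi.single univ (ε / (1 - γ)),
    add_nonneg hy (Pi.single_nonneg.2 (div_nonneg hε.le (by linarith))), fun i => ?_, ?_⟩
  · rw [sum_add_single_univ_mul_wt, hδ]; linarith [hprem i]
  · rw [sum_add_single_univ_mul_wt, hδ]; linarith

lemma mem_premiseCone_of_entailsFrom (hγ1 : γ < 1) (h : entailsFrom γ P univ X₀ Y₀) :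
    (fun Z => wt γ Z X₀ Y₀) ∈ premiseCone γ P := by
  by_contra hv
  obtain ⟨y, hy, hprem, hconc⟩ := exists_weight_of_notMem_premiseCone hγ1 hv
  obtain ⟨y', hy', hprem', hconc'⟩ := exists_strict_weight hγ1 hy hprem hconc
  obtain ⟨m, hprem'', hconc''⟩ := exists_nat_weight_of_strict hy' hprem' hconc'
  have hsat := h (∑ Z, Multiset.replicate (m Z) Z) fun i _ => by
    simpa [satPI_iff_sum_count_mul_wt_nonneg, Multiset.count_sum_replicate] using (hprem'' i).le
  rw [satPI_iff_sum_count_mul_wt_nonneg] at hsat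
  simp only [Multiset.count_sum_replicate] at hsat
  exact hconc''.not_ge hsat

def IsHomogeneousWitness (P : Fin k → Finset (Fin n) × Finset (Fin n)) (L : Finset (Fin k))
    (X₀ Y₀ : Finset (Fin n)) : Prop :=
  L.Nonempty ∧ homogFrom P L ∧
    (L.biUnion (fun i => (P i).1) ⊆ X₀ ∧ X₀ ⊆ L.biUnion (fun i => (P i).1 ∪ (P i).2)) ∧
    Y₀ ⊆ X₀ ∪ L.inf (fun i => (P i).2)

lemma card_sub_one_le_mul_card (hγ1 : γ ≤ 1) (hγk : ((k : ℝ) - 1) / k ≤ γ)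
    (L : Finset (Fin k)) : (L.card : ℝ) - 1 ≤ γ * L.card := by
  rcases Nat.eq_zero_or_pos k with rfl | hk
  · simp [Finset.eq_empty_of_isEmpty L]
  have hk' : (0 : ℝ) < k := by exact_mod_cast hk
  have hLk : (L.card : ℝ) ≤ k := by exact_mod_cast card_le_univ L |>.trans_eq (Fintype.card_fin k)
  rw [div_le_iff₀ hk'] at hγk
  nlinarith

/-- Off `X₀`, homogeneity leaves either no premise of `L` applicable, or one violated: its cost `γ`
exceeds the `(|L| - 1)(1 - γ)` the others can earn, because `γ ≥ (|L| - 1) / |L|`. -/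
lemma sum_wt_le_card_mul_wt (hγ1 : γ ≤ 1) {L : Finset (Fin k)}
    (hL : (L.card : ℝ) - 1 ≤ γ * L.card) (hW : IsHomogeneousWitness P L X₀ Y₀)
    (Z : Finset (Fin n)) : ∑ i ∈ L, wt γ Z (P i).1 (P i).2 ≤ L.card * wt γ Z X₀ Y₀ := by
  obtain ⟨-, hhom, ⟨hXL, hXLY⟩, hY⟩ := hW
  have hXi : ∀ i ∈ L, (P i).1 ⊆ X₀ := fun i hi => (subset_biUnion_of_mem _ hi).trans hXL
  by_cases hXYZ : X₀ ∪ Y₀ ⊆ Z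
  · rw [wt_of_union_subset hXYZ]
    calc ∑ i ∈ L, wt γ Z (P i).1 (P i).2 ≤ ∑ _i ∈ L, (1 - γ) :=
          sum_le_sum fun i _ => wt_le_one_sub hγ1
      _ = L.card * (1 - γ) := by rw [sum_const, nsmul_eq_mul]
  by_cases hXZ : X₀ ⊆ Z
  · obtain ⟨b, hbY, hbZ⟩ : ∃ b ∈ Y₀, b ∉ Z := not_subset.1 fun h => hXYZ (union_subset hXZ h)
    have hbX : b ∉ X₀ := fun hb => hbZ (hXZ hb)
    have hbYi : ∀ i ∈ L, b ∈ (P i).2 := fun i hi =>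
      mem_inf.1 ((mem_union.1 (hY hbY)).resolve_left hbX) i hi
    rw [wt_of_violation hXZ hXYZ, sum_congr rfl fun i hi => wt_of_violation ((hXi i hi).trans hXZ)
      fun h => hbZ (h (mem_union_right _ (hbYi i hi))), sum_const, nsmul_eq_mul]
  rw [wt_of_not_subset hXZ, mul_zero]
  by_cases hviol : ∃ j ∈ L, (P j).1 ⊆ Z ∧ ¬ (P j).1 ∪ (P j).2 ⊆ Z
  · obtain ⟨j, hj, hjZ, hjYZ⟩ := hviol
    calc ∑ i ∈ L, wt γ Z (P i).1 (P i).2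
        = wt γ Z (P j).1 (P j).2 + ∑ i ∈ L.erase j, wt γ Z (P i).1 (P i).2 :=
          (add_sum_erase L _ hj).symm
      _ ≤ -γ + ∑ _i ∈ L.erase j, (1 - γ) :=
          add_le_add (wt_of_violation hjZ hjYZ).le (sum_le_sum fun i _ => wt_le_one_sub hγ1)
      _ = -γ + (L.card - 1) * (1 - γ) := by
          rw [sum_const, card_erase_of_mem hj, nsmul_eq_mul, Nat.cast_pred (card_pos.2 ⟨j, hj⟩)]
      _ ≤ 0 := by nlinarith
  push Not at hviol
  rcases hhom Z fun i hi => or_iff_not_imp_left.2 fun h => hviol i hi (not_not.1 h) with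
    hnone | hall
  · exact (sum_eq_zero fun i hi => wt_of_not_subset (hnone i hi)).le
  · exact absurd (hXLY.trans (biUnion_subset.2 hall)) hXZ

lemma mem_premiseCone_of_isHomogeneousWitness (hγ1 : γ ≤ 1) {L : Finset (Fin k)}
    (hL : (L.card : ℝ) - 1 ≤ γ * L.card) (hW : IsHomogeneousWitness P L X₀ Y₀) :
    (fun Z => wt γ Z X₀ Y₀) ∈ premiseCone γ P := by
  have hcard : (0 : ℝ) < L.card := by exact_mod_cast card_pos.2 hW.1
  refine ⟨fun i => if i ∈ L then (L.card : ℝ)⁻¹ else 0,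
    fun i => by dsimp only; split_ifs <;> positivity, fun Z => ?_⟩
  calc ∑ i, (if i ∈ L then (L.card : ℝ)⁻¹ else 0) * wt γ Z (P i).1 (P i).2
      = (L.card : ℝ)⁻¹ * ∑ i ∈ L, wt γ Z (P i).1 (P i).2 := by
        simp [ite_mul, sum_ite_mem, mul_sum]
    _ ≤ (L.card : ℝ)⁻¹ * (L.card * wt γ Z X₀ Y₀) := by
        gcongr; exact sum_wt_le_card_mul_wt hγ1 hL hW Z
    _ = wt γ Z X₀ Y₀ := by field_simp

lemma mem_premiseCone_of_subset (hγ1 : γ ≤ 1) (h : Y₀ ⊆ X₀) :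
    (fun Z => wt γ Z X₀ Y₀) ∈ premiseCone γ P := by
  refine mem_premiseCone_of_nonneg fun Z => ?_
  by_cases hXZ : X₀ ⊆ Z
  · simp only [Pi.zero_apply]
    rw [wt_of_union_subset (union_subset hXZ (h.trans hXZ))]
    linarith
  · simp [wt_of_not_subset hXZ]

def IsCertificate (γ : ℝ) (P : Fin k → Finset (Fin n) × Finset (Fin n)) (X₀ Y₀ : Finset (Fin n))
    (lam : Fin k → ℝ) : Prop :=
  0 ≤ lam ∧ ∀ Z, ∑ i, lam i * wt γ Z (P i).1 (P i).2 ≤ wt γ Z X₀ Y₀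

namespace IsCertificate

variable {lam : Fin k → ℝ} {L : Finset (Fin k)}

lemma sum_eq_one (hγ0 : 0 < γ) (hγ1 : γ < 1) (hY : ¬ Y₀ ⊆ X₀)
    (hc : IsCertificate γ P X₀ Y₀ lam) : ∑ i, lam i = 1 := by
  have hle : (∑ i, lam i) * (1 - γ) ≤ 1 - γ := by
    simpa only [wt_univ, ← sum_mul] using hc.2 univ
  have hge : -γ * ∑ i, lam i ≤ -γ :=
    calc -γ * ∑ i, lam i = ∑ i, lam i * -γ := by rw [mul_sum]; simp only [mul_comm]
      _ ≤ ∑ i, lam i * wt γ X₀ (P i).1 (P i).2 :=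
        sum_le_sum fun i _ => mul_le_mul_of_nonneg_left (neg_le_wt hγ0.le) (hc.1 i)
      _ ≤ wt γ X₀ X₀ Y₀ := hc.2 X₀
      _ = -γ := wt_of_violation subset_rfl fun h => hY (subset_union_right.trans h)
  nlinarith

/-- Since the total mass is `1` and every weight is at least `-γ`, on a transaction violating the
conclusion every premise that the certificate uses must be violated too. -/
lemma premise_violated (hγ0 : 0 < γ) (hc : IsCertificate γ P X₀ Y₀ lam) (hsum : ∑ i, lam i = 1)
    {Z : Finset (Fin n)} (hXZ : X₀ ⊆ Z) (hXYZ : ¬ X₀ ∪ Y₀ ⊆ Z) {i : Fin k} (hi : lam i ≠ 0) :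
    (P i).1 ⊆ Z ∧ ¬ (P i).1 ∪ (P i).2 ⊆ Z := by
  refine (wt_eq_neg_iff hγ0).1 (eq_neg_of_add_eq_zero_left (eq_zero_of_sum_mul_nonpos hc.1
    (a := fun j => wt γ Z (P j).1 (P j).2 + γ)
    (fun j _ => neg_le_iff_add_nonneg.1 (neg_le_wt hγ0.le)) ?_ hi))
  calc ∑ j, lam j * (wt γ Z (P j).1 (P j).2 + γ)
      = ∑ j, lam j * wt γ Z (P j).1 (P j).2 + γ * ∑ j, lam j := by
        rw [mul_sum, ← sum_add_distrib]; exact sum_congr rfl fun _ _ => by ring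
    _ ≤ wt γ Z X₀ Y₀ + γ := by rw [hsum, mul_one]; exact (add_le_add_iff_right γ).2 (hc.2 Z)
    _ = 0 := by rw [wt_of_violation hXZ hXYZ, neg_add_cancel]

lemma subset_of_ne_zero (hγ0 : 0 < γ) (hY : ¬ Y₀ ⊆ X₀) (hc : IsCertificate γ P X₀ Y₀ lam)
    (hsum : ∑ i, lam i = 1) {i : Fin k} (hi : lam i ≠ 0) : (P i).1 ⊆ X₀ :=
  (hc.premise_violated hγ0 hsum subset_rfl (fun h => hY (subset_union_right.trans h)) hi).1

lemma biUnion_subset (hγ0 : 0 < γ) (hY : ¬ Y₀ ⊆ X₀) (hc : IsCertificate γ P X₀ Y₀ lam)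
    (hsum : ∑ i, lam i = 1) (hL : ∀ i, i ∈ L ↔ lam i ≠ 0) :
    L.biUnion (fun i => (P i).1) ⊆ X₀ :=
  Finset.biUnion_subset.2 fun i hi => hc.subset_of_ne_zero hγ0 hY hsum ((hL i).1 hi)

lemma subset_biUnion (hγ1 : γ < 1) (hc : IsCertificate γ P X₀ Y₀ lam) (hsum : ∑ i, lam i = 1)
    (hL : ∀ i, i ∈ L ↔ lam i ≠ 0) : X₀ ⊆ L.biUnion (fun i => (P i).1 ∪ (P i).2) := by
  by_contra hX
  set Z := L.biUnion fun i => (P i).1 ∪ (P i).2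
  have hwit : ∑ i, lam i * wt γ Z (P i).1 (P i).2 = ∑ i, lam i * (1 - γ) := by
    refine sum_congr rfl fun i _ => ?_
    by_cases hi : lam i = 0
    · simp [hi]
    · rw [wt_of_union_subset (subset_biUnion_of_mem (fun i => (P i).1 ∪ (P i).2) ((hL i).2 hi))]
  have := hc.2 Z
  rw [hwit, ← sum_mul, hsum, one_mul, wt_of_not_subset hX] at this
  linarith

lemma subset_union_inf (hγ0 : 0 < γ) (hY : ¬ Y₀ ⊆ X₀) (hc : IsCertificate γ P X₀ Y₀ lam)
    (hsum : ∑ i, lam i = 1) (hL : ∀ i, i ∈ L ↔ lam i ≠ 0) :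
    Y₀ ⊆ X₀ ∪ L.inf (fun i => (P i).2) := by
  intro b hb
  by_cases hbX : b ∈ X₀
  · exact mem_union_left _ hbX
  refine mem_union_right _ (mem_inf.2 fun i hi => ?_)
  have hX : X₀ ⊆ univ.erase b := fun x hx => mem_erase.2 ⟨fun h => hbX (h ▸ hx), mem_univ x⟩
  have hXY : ¬ X₀ ∪ Y₀ ⊆ univ.erase b := fun h => (mem_erase.1 (h (mem_union_right _ hb))).1 rfl
  obtain ⟨x, hx, hxZ⟩ := not_subset.1 (hc.premise_violated hγ0 hsum hX hXY ((hL i).1 hi)).2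
  obtain rfl : x = b := by simpa using hxZ
  exact (mem_union.1 hx).resolve_left fun h =>
    hbX (hc.subset_of_ne_zero hγ0 hY hsum ((hL i).1 hi) h)

lemma homogFrom (hγ0 : 0 < γ) (hγ1 : γ < 1) (hY : ¬ Y₀ ⊆ X₀) (hc : IsCertificate γ P X₀ Y₀ lam)
    (hsum : ∑ i, lam i = 1) (hL : ∀ i, i ∈ L ↔ lam i ≠ 0) : homogFrom P L := by
  intro Z hZ
  have hXi : ∀ i ∈ L, (P i).1 ⊆ X₀ := fun i hi => hc.subset_of_ne_zero hγ0 hY hsum ((hL i).1 hi)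
  by_cases hXZ : X₀ ⊆ Z
  · exact Or.inr fun i hi => (hZ i hi).resolve_left fun h => h ((hXi i hi).trans hXZ)
  refine Or.inl fun i hi hiZ => ?_
  have hzero := eq_zero_of_sum_mul_nonpos hc.1 (a := fun j => wt γ Z (P j).1 (P j).2)
    (fun j hj => ?_) ((hc.2 Z).trans (wt_of_not_subset hXZ).le) ((hL i).1 hi)
  · rw [wt_of_union_subset ((hZ i hi).resolve_left (not_not.2 hiZ))] at hzero
    linarith
  · rcases hZ j ((hL j).2 hj) with hjZ | hjZ
    · exact (wt_of_not_subset hjZ).ge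
    · exact (wt_of_union_subset hjZ).symm ▸ sub_nonneg.2 hγ1.le

end IsCertificate

lemma exists_isHomogeneousWitness_of_mem_premiseCone (hγ0 : 0 < γ) (hγ1 : γ < 1)
    (hY : ¬ Y₀ ⊆ X₀) (h : (fun Z => wt γ Z X₀ Y₀) ∈ premiseCone γ P) :
    ∃ L, IsHomogeneousWitness P L X₀ Y₀ := by
  obtain ⟨lam, hc⟩ : ∃ lam, IsCertificate γ P X₀ Y₀ lam := h
  have hsum := hc.sum_eq_one hγ0 hγ1 hY
  have hL : ∀ i, i ∈ univ.filter (fun i => lam i ≠ 0) ↔ lam i ≠ 0 := by simp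
  obtain ⟨i, -, hi⟩ := exists_ne_zero_of_sum_ne_zero (hsum ▸ one_ne_zero)
  exact ⟨_, ⟨i, (hL i).2 hi⟩, hc.homogFrom hγ0 hγ1 hY hsum hL,
    ⟨hc.biUnion_subset hγ0 hY hsum hL, hc.subset_biUnion hγ1 hsum hL⟩,
    hc.subset_union_inf hγ0 hY hsum hL⟩

end Entailment

theorem stmt14_general {n k : ℕ} (γ : ℝ) (hγ0 : 0 < γ) (hγ1 : γ < 1)
    (P : Fin k → Finset (Fin n) × Finset (Fin n)) (X₀ Y₀ : Finset (Fin n))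
    (hγk : ((k : ℝ) - 1) / (k : ℝ) ≤ γ) :
    (entailsFrom γ P Finset.univ X₀ Y₀ ↔
      ∃ L : Finset (Fin k), properFrom γ P L X₀ Y₀) ∧
    (entailsFrom γ P Finset.univ X₀ Y₀ ↔
      (Y₀ ⊆ X₀ ∨ ∃ L : Finset (Fin k), L.Nonempty ∧
        homogFrom P L ∧
        (L.biUnion (fun i => (P i).1) ⊆ X₀ ∧
         X₀ ⊆ L.biUnion (fun i => (P i).1 ∪ (P i).2)) ∧
        Y₀ ⊆ X₀ ∪ L.inf (fun i => (P i).2))) := by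
  refine ⟨⟨exists_properFrom_of_entailsFrom, fun ⟨L, hL⟩ => hL.1.mono (subset_univ L)⟩,
    ⟨fun h => ?_, fun h => entailsFrom_of_mem_premiseCone ?_⟩⟩
  · have hcert := mem_premiseCone_of_entailsFrom hγ1 h
    by_cases hY : Y₀ ⊆ X₀
    · exact Or.inl hY
    · exact Or.inr (exists_isHomogeneousWitness_of_mem_premiseCone hγ0 hγ1 hY hcert)
  · rcases h with hY | ⟨L, hW⟩
    · exact mem_premiseCone_of_subset hγ1.le hY
    · exact mem_premiseCone_of_isHomogeneousWitness hγ1.le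
        (card_sub_one_le_mul_card hγ1.le hγk L) hW

theorem stmt14 {n k : ℕ} (γ : ℝ) (hγ0 : 0 < γ) (hγ1 : γ < 1) (hk : 1 ≤ k)
    (P : Fin k → Finset (Fin n) × Finset (Fin n)) (X₀ Y₀ : Finset (Fin n))
    (hγk : ((k : ℝ) - 1) / (k : ℝ) ≤ γ) :
    (entailsFrom γ P Finset.univ X₀ Y₀ ↔
      ∃ L : Finset (Fin k), properFrom γ P L X₀ Y₀) ∧
    (entailsFrom γ P Finset.univ X₀ Y₀ ↔
      (Y₀ ⊆ X₀ ∨ ∃ L : Finset (Fin k), L.Nonempty ∧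
        homogFrom P L ∧
        (L.biUnion (fun i => (P i).1) ⊆ X₀ ∧
         X₀ ⊆ L.biUnion (fun i => (P i).1 ∪ (P i).2)) ∧
        Y₀ ⊆ X₀ ∪ L.inf (fun i => (P i).2))) :=
  stmt14_general γ hγ0 hγ1 P X₀ Y₀ hγk
end
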